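/- arXiv:2001.08375 — 10 statements merged into one kernel-verified Lean document; each statement's English description precedes it below -/
import Mathlib

section
/- Bayes' theorem for finite stochastic maps: let X and Y be finite nonempty types, let p : PMF X be a probability distribution on X, let f : X → PMF Y be a stochastic map, and let q := p.bind f be the pushforward distribution on Y. Then there exists a stochastic map g : Y → PMF X such that (g y) x * q y = (f x) y * p x for every x ∈ X and y ∈ Y. Moreover, g is q-almost-everywhere unique: if g' : Y → PMF X also satisfies (g' y) x * q y = (f x) y * p x for all x and y, then g y = g' y for every y ∈ Y with q y ≠ 0. -/
open scoped ENNReal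

namespace PMF

variable {α β : Type*}

/-- The Bayesian inverse of `f` with respect to the prior `p`. Where `p.bind f b = 0` Bayes' rule
does not constrain it, and it is set to `p`. -/
noncomputable def posterior (p : PMF α) (f : α → PMF β) (b : β) : PMF α :=
  if h : p.bind f b = 0 then p
  else normalize (fun a => p a * f a b) h ((p.bind f).apply_ne_top b)

theorem posterior_apply_mul_bind_apply (p : PMF α) (f : α → PMF β) (a : α) (b : β) :
    p.posterior f b a * p.bind f b = f a b * p a := by
  rw [posterior]
  split_ifs with h
  · rw [h, mul_zero, mul_comm]
    exact ((ENNReal.tsum_eq_zero.mp h) a).symm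
  · change p a * f a b * (p.bind f b)⁻¹ * p.bind f b = _
    rw [mul_assoc, ENNReal.inv_mul_cancel h (apply_ne_top _ b),
      mul_one, mul_comm]

theorem ext_of_apply_mul_eq {p p' : PMF α} {c : ℝ≥0∞} (hc0 : c ≠ 0) (hc : c ≠ ∞)
    (h : ∀ a, p a * c = p' a * c) : p = p' :=
  PMF.ext fun a => (ENNReal.mul_left_inj hc0 hc).mp (h a)

end PMF

theorem bayes_theorem_finstoch_general
    {X Y : Type*}
    (p : PMF X) (f : X → PMF Y) (q : PMF Y) (hq : q = p.bind f) :
    ∃ g : Y → PMF X,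
      (∀ (x : X) (y : Y), g y x * q y = f x y * p x) ∧
      (∀ g' : Y → PMF X,
        (∀ (x : X) (y : Y), g' y x * q y = f x y * p x) →
        ∀ y : Y, q y ≠ 0 → g y = g' y) := by
  subst hq
  refine ⟨p.posterior f, p.posterior_apply_mul_bind_apply f, fun g' hg' y hy => ?_⟩
  exact PMF.ext_of_apply_mul_eq hy (PMF.apply_ne_top _ y) fun x =>
    (p.posterior_apply_mul_bind_apply f x y).trans (hg' x y).symm

/-- **Bayes' theorem for finite stochastic maps.** Given finite nonempty types `X` and `Y`,
a probability distribution `p` on `X`, a stochastic map `f : X → PMF Y`, and the pushforward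
`q := p.bind f`, there exists a stochastic map `g : Y → PMF X` satisfying Bayes' rule
`g y x * q y = f x y * p x` for all points, and `g` is unique `q`-almost everywhere. -/
theorem bayes_theorem_finstoch
    {X Y : Type*} [Fintype X] [Nonempty X] [Fintype Y] [Nonempty Y]
    (p : PMF X) (f : X → PMF Y) (q : PMF Y) (hq : q = p.bind f) :
    ∃ g : Y → PMF X,
      (∀ (x : X) (y : Y), g y x * q y = f x y * p x) ∧
      (∀ g' : Y → PMF X,
        (∀ (x : X) (y : Y), g' y x * q y = f x y * p x) →
        ∀ y : Y, q y ≠ 0 → g y = g' y) :=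
  bayes_theorem_finstoch_general p f q hq
end

section
/- Multiplication Lemma: let A and B be unital C*-algebras over ℂ and let F : B → A be an SPU map. If some b ∈ B satisfies F (star b * b) = star (F b) * F b, then F (star b * c) = star (F b) * F c and F (star c * b) = star (F c) * F b for every c ∈ B. -/
/-!
The Schwarz defect `Φ(x, y) = F (star x * y) - star (F x) * F y` is sesquilinear, and
`Φ(x, x) ≥ 0` is the Kadison–Schwarz inequality. Expanding it at `b + t • c` gives
`0 ≤ Φ(b, b) + t̄ Φ(c, b) + t Φ(b, c) + |t|² Φ(c, c)` for all `t : ℂ`. When `Φ(b, b) = 0`,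
the linear terms must vanish, as for a nonnegative quadratic polynomial without constant term:
letting `t → 0` along `ℝ` and along `i ℝ` gives `Φ(c, b) + Φ(b, c) = 0` and `Φ(b, c) = Φ(c, b)`.
-/

open Filter Topology

section QuadraticPencil

variable {E : Type*} [AddCommGroup E] [PartialOrder E] [Module ℝ E] [PosSMulMono ℝ E]
  [TopologicalSpace E] [ContinuousAdd E] [ContinuousSMul ℝ E] [ClosedIciTopology E]

theorem nonneg_of_forall_pos_smul_add_sq_smul_nonneg {x p : E}
    (h : ∀ s : ℝ, 0 < s → 0 ≤ s • x + s ^ 2 • p) : 0 ≤ x := by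
  have hdiv : ∀ s : ℝ, 0 < s → 0 ≤ x + s • p := fun s hs => by
    have := smul_nonneg (inv_nonneg.mpr hs.le) (h s hs)
    rwa [smul_add, smul_smul, smul_smul, inv_mul_cancel₀ hs.ne', one_smul, sq,
      ← mul_assoc, inv_mul_cancel₀ hs.ne', one_mul] at this
  have hlim : Tendsto (fun s : ℝ => x + s • p) (𝓝[>] 0) (𝓝 x) := by
    have hs : Tendsto (fun s : ℝ => s) (𝓝[>] 0) (𝓝 0) :=
      tendsto_nhdsWithin_of_tendsto_nhds tendsto_id
    simpa using (hs.smul_const p).const_add x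
  exact ge_of_tendsto hlim (eventually_nhdsWithin_of_forall hdiv)

theorem eq_zero_of_forall_smul_add_sq_smul_nonneg [IsOrderedAddMonoid E] {x p : E}
    (h : ∀ s : ℝ, s ≠ 0 → 0 ≤ s • x + s ^ 2 • p) : x = 0 := by
  have hx : 0 ≤ x := nonneg_of_forall_pos_smul_add_sq_smul_nonneg fun s hs => h s hs.ne'
  have hnx : 0 ≤ -x := nonneg_of_forall_pos_smul_add_sq_smul_nonneg fun s hs => by
    simpa [neg_smul, smul_neg] using h (-s) (neg_ne_zero.mpr hs.ne')
  exact le_antisymm (neg_nonneg.mp hnx) hx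

theorem eq_zero_of_forall_star_smul_add_smul_add_star_mul_smul_nonneg [IsOrderedAddMonoid E]
    [Module ℂ E] [IsScalarTower ℝ ℂ E]
    {x y p : E} (h : ∀ t : ℂ, 0 ≤ star t • x + t • y + (star t * t) • p) : x = 0 ∧ y = 0 := by
  have hreal (s : ℝ) (z : E) : (s : ℂ) • z = s • z := by
    rw [← Complex.coe_algebraMap, algebraMap_smul]
  have hsum : x + y = 0 := eq_zero_of_forall_smul_add_sq_smul_nonneg (p := p) fun s _ => by
    convert h s using 1
    simp only [Complex.star_def, Complex.conj_ofReal, ← Complex.ofReal_mul, hreal, smul_add, sq]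
  have hdiff : Complex.I • (y - x) = 0 := eq_zero_of_forall_smul_add_sq_smul_nonneg (p := p)
    fun s _ => by
    have hnorm : star ((s : ℂ) * Complex.I) * (s * Complex.I) = ((s ^ 2 : ℝ) : ℂ) := by
      simp [Complex.ext_iff, sq]
    convert h (s * Complex.I) using 1
    rw [hnorm, hreal, Complex.star_def, map_mul, Complex.conj_ofReal, Complex.conj_I, mul_smul,
      mul_smul, hreal, hreal, smul_sub, smul_sub, neg_smul, smul_neg]
    abel
  have hyx : y = x := sub_eq_zero.mp ((smul_eq_zero.mp hdiff).resolve_left Complex.I_ne_zero)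
  have hx : x = 0 := by
    rw [hyx, ← two_smul ℝ x] at hsum
    exact (smul_eq_zero.mp hsum).resolve_left two_ne_zero
  exact ⟨hx, hyx.trans hx⟩

end QuadraticPencil

section SchwarzDefect

variable {A B : Type*} [NonUnitalRing A] [StarRing A] [Module ℂ A] [StarModule ℂ A]
  [IsScalarTower ℂ A A] [SMulCommClass ℂ A A]
  [NonUnitalRing B] [StarRing B] [Module ℂ B] [StarModule ℂ B]
  [IsScalarTower ℂ B B] [SMulCommClass ℂ B B]

def schwarzDefect (F : B →ₗ[ℂ] A) (x y : B) : A := F (star x * y) - star (F x) * F y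

theorem schwarzDefect_add_smul_self (F : B →ₗ[ℂ] A) (x y : B) (t : ℂ) :
    schwarzDefect F (x + t • y) (x + t • y) = schwarzDefect F x x + star t • schwarzDefect F y x
      + t • schwarzDefect F x y + (star t * t) • schwarzDefect F y y := by
  simp only [schwarzDefect, star_add, star_smul, add_mul, mul_add, map_add, map_smul,
    smul_mul_assoc, mul_smul_comm, smul_sub]
  module

end SchwarzDefect

theorem multiplication_lemma_general
    {A B : Type*} [CStarAlgebra A] [PartialOrder A] [StarOrderedRing A] [CStarAlgebra B]
    (F : B →ₗ[ℂ] A)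
    (hFKS : ∀ b : B, star (F b) * F b ≤ F (star b * b))
    (b : B) (hb : F (star b * b) = star (F b) * F b) :
    ∀ c : B, F (star b * c) = star (F b) * F c ∧ F (star c * b) = star (F c) * F b := by
  intro c
  have hbb : schwarzDefect F b b = 0 := sub_eq_zero.mpr hb
  have hpos (t : ℂ) : 0 ≤ star t • schwarzDefect F c b + t • schwarzDefect F b c
      + (star t * t) • schwarzDefect F c c := by
    have h : 0 ≤ schwarzDefect F (b + t • c) (b + t • c) := sub_nonneg.mpr (hFKS _)
    rwa [schwarzDefect_add_smul_self, hbb, zero_add] at h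
  obtain ⟨hcb, hbc⟩ := eq_zero_of_forall_star_smul_add_smul_add_star_mul_smul_nonneg hpos
  exact ⟨sub_eq_zero.mp hbc, sub_eq_zero.mp hcb⟩

/-- **The Multiplication Lemma.** If `F : B → A` is a Schwarz-positive unital (SPU) map
between unital C*-algebras over `ℂ` and `b ∈ B` saturates the Kadison–Schwarz inequality,
i.e. `F (star b * b) = star (F b) * F b`, then `F (star b * c) = star (F b) * F c` and
`F (star c * b) = star (F c) * F b` for every `c ∈ B`. -/
theorem multiplication_lemma
    {A B : Type*} [CStarAlgebra A] [PartialOrder A] [StarOrderedRing A] [CStarAlgebra B]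
    (F : B →ₗ[ℂ] A) (hF1 : F 1 = 1)
    (hFKS : ∀ b : B, star (F b) * F b ≤ F (star b * b))
    (b : B) (hb : F (star b * b) = star (F b) * F b) :
    ∀ c : B, F (star b * c) = star (F b) * F c ∧ F (star c * b) = star (F c) * F b :=
  multiplication_lemma_general F hFKS b hb
end

section
/- S-positivity of Schwarz-positive unital maps: let A, B, C be unital C*-algebras over ℂ and let G : C → B and F : B → A be SPU maps such that the composite F ∘ G is multiplicative, i.e. F (G (c * c')) = F (G c) * F (G c') for all c, c' ∈ C. Then F (star (G c) * b) = star (F (G c)) * F b and F (G c * b) = F (G c) * F b for all c ∈ C and b ∈ B. -/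
/-!
A Schwarz map `F` is positive, and positive `ℂ`-linear maps are `⋆`-preserving. If
`F (x⋆ x) = (F x)⋆ F x`, then applying the Schwarz inequality to `z x + b` for every `z : ℂ` shows
that the positive defect `F (b⋆ b) - (F b)⋆ F b` dominates `-(z T⋆ + z̄ T)` with
`T = F (x⋆ b) - (F x)⋆ F b`; letting `|z| → ∞` along the real and imaginary axes forces `T = 0`.
For `x = G c` the hypothesis on `F (x⋆ x)` holds because
`(F (G c))⋆ F (G c) ≤ F ((G c)⋆ G c) ≤ F (G (c⋆ c)) = (F (G c))⋆ F (G c)`.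
-/

open Filter Topology ComplexConjugate

lemma eq_zero_of_forall_nonneg_add_smul {E : Type*} [AddCommGroup E] [PartialOrder E]
    [IsOrderedAddMonoid E] [Module ℝ E] [PosSMulMono ℝ E] [TopologicalSpace E]
    [OrderClosedTopology E] [ContinuousAdd E] [ContinuousSMul ℝ E] {S R : E}
    (h : ∀ t : ℝ, 0 ≤ S + t • R) : R = 0 := by
  have nonneg : ∀ {R : E}, (∀ t : ℝ, 0 ≤ S + t • R) → 0 ≤ R := fun {R} h => by
    have hlim : Tendsto (fun t : ℝ => t⁻¹ • S + R) atTop (𝓝 R) := by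
      simpa using ((tendsto_inv_atTop_zero (𝕜 := ℝ)).smul_const S).add_const R
    refine ge_of_tendsto hlim ((eventually_gt_atTop 0).mono fun t ht => ?_)
    simpa [smul_add, smul_smul, ht.ne'] using smul_nonneg (inv_nonneg.mpr ht.le) (h t)
  exact le_antisymm (neg_nonneg.mp (nonneg fun t => by simpa using h (-t))) (nonneg h)

def IsSchwarzMap {A B : Type*} [CStarAlgebra A] [PartialOrder A] [CStarAlgebra B]
    (F : B →ₗ[ℂ] A) : Prop :=
  ∀ b : B, star (F b) * F b ≤ F (star b * b)

section CStarAlgebra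

variable {A B : Type*} [CStarAlgebra A] [PartialOrder A] [StarOrderedRing A]
  [CStarAlgebra B] [PartialOrder B] [StarOrderedRing B]

lemma eq_zero_of_forall_nonneg_add_smul_star_add_conj_smul {S T : A}
    (h : ∀ z : ℂ, 0 ≤ S + z • star T + conj z • T) : T = 0 := by
  have hre : star T + T = 0 := eq_zero_of_forall_nonneg_add_smul (S := S) fun t => by
    simpa [smul_add, add_assoc, Complex.coe_smul] using h t
  have him : Complex.I • (star T - T) = 0 :=
    eq_zero_of_forall_nonneg_add_smul (S := S) fun t => by
      convert h (t * Complex.I) using 1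
      rw [map_mul, Complex.conj_ofReal, Complex.conj_I, ← Complex.coe_smul]
      module
  have hsa : star T = T := sub_eq_zero.mp ((smul_eq_zero.mp him).resolve_left Complex.I_ne_zero)
  rw [hsa, ← two_smul ℂ T] at hre
  exact (smul_eq_zero.mp hre).resolve_left two_ne_zero

namespace IsSchwarzMap

variable {F : B →ₗ[ℂ] A} (hF : IsSchwarzMap F)
include hF

lemma map_nonneg {b : B} (hb : 0 ≤ b) : 0 ≤ F b := by
  obtain ⟨s, -, rfl⟩ := CStarAlgebra.nonneg_iff_eq_star_mul_self.mp hb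
  exact (star_mul_self_nonneg _).trans (hF s)

noncomputable def toPositiveLinearMap : B →ₚ[ℂ] A :=
  PositiveLinearMap.mk₀ F fun _ => hF.map_nonneg

lemma mono {a b : B} (hab : a ≤ b) : F a ≤ F b :=
  hF.toPositiveLinearMap.monotone' hab

lemma map_star (b : B) : F (star b) = star (F b) :=
  StarHomClass.map_star hF.toPositiveLinearMap b

lemma defect_add_smul_eq (x b : B) (hx : F (star x * x) = star (F x) * F x) (z : ℂ) :
    F (star (z • x + b) * (z • x + b)) - star (F (z • x + b)) * F (z • x + b) =
      (F (star b * b) - star (F b) * F b) + z • star (F (star x * b) - star (F x) * F b) +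
        conj z • (F (star x * b) - star (F x) * F b) := by
  simp only [star_sub, star_mul, star_star, ← hF.map_star, star_add, star_smul, map_add,
    map_smul, add_mul, mul_add, smul_mul_assoc, mul_smul_comm, hx, Complex.star_def]
  module

/-- One half of Choi's description of the multiplicative domain. -/
lemma map_star_mul_of_map_star_mul_self {x : B} (hx : F (star x * x) = star (F x) * F x)
    (b : B) : F (star x * b) = star (F x) * F b := by
  refine sub_eq_zero.mp (eq_zero_of_forall_nonneg_add_smul_star_add_conj_smul
    (S := F (star b * b) - star (F b) * F b) fun z => ?_)
  rw [← hF.defect_add_smul_eq x b hx z]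
  exact sub_nonneg.mpr (hF _)

end IsSchwarzMap

end CStarAlgebra

theorem spu_is_S_positive_general
    {A B C : Type*}
    [CStarAlgebra A] [PartialOrder A] [StarOrderedRing A]
    [CStarAlgebra B] [PartialOrder B] [StarOrderedRing B]
    [CStarAlgebra C]
    (G : C →ₗ[ℂ] B)
    (hGKS : ∀ c : C, star (G c) * G c ≤ G (star c * c))
    (F : B →ₗ[ℂ] A)
    (hFKS : ∀ b : B, star (F b) * F b ≤ F (star b * b))
    (hmul : ∀ c c' : C, F (G (c * c')) = F (G c) * F (G c')) :
    ∀ (c : C) (b : B),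
      F (star (G c) * b) = star (F (G c)) * F b ∧ F (G c * b) = F (G c) * F b := by
  -- `⋆`-preservation of `G` is proved via positivity, which needs an order on `C`.
  let _ := CStarAlgebra.spectralOrder C
  let _ := CStarAlgebra.spectralOrderedRing C
  have hF : IsSchwarzMap F := hFKS
  have hG : IsSchwarzMap G := hGKS
  have hFG_star (c : C) : F (G (star c)) = star (F (G c)) := by rw [hG.map_star, hF.map_star]
  have hdomain (c : C) : F (star (G c) * G c) = star (F (G c)) * F (G c) := by
    refine le_antisymm ?_ (hF (G c))
    calc F (star (G c) * G c) ≤ F (G (star c * c)) := hF.mono (hG c)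
      _ = star (F (G c)) * F (G c) := by rw [hmul, hFG_star]
  intro c b
  refine ⟨hF.map_star_mul_of_map_star_mul_self (hdomain c) b, ?_⟩
  simpa [hG.map_star, hF.map_star] using
    hF.map_star_mul_of_map_star_mul_self (hdomain (star c)) b

/-- **S-positivity of Schwarz-positive unital maps.** If `G : C → B` and `F : B → A` are SPU
maps between unital C*-algebras over `ℂ` such that `F ∘ G` is multiplicative, then
`F (star (G c) * b) = star (F (G c)) * F b` and `F (G c * b) = F (G c) * F b`
for all `c ∈ C` and `b ∈ B`. -/
theorem spu_is_S_positive
    {A B C : Type*}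
    [CStarAlgebra A] [PartialOrder A] [StarOrderedRing A]
    [CStarAlgebra B] [PartialOrder B] [StarOrderedRing B]
    [CStarAlgebra C]
    (G : C →ₗ[ℂ] B) (hG1 : G 1 = 1)
    (hGKS : ∀ c : C, star (G c) * G c ≤ G (star c * c))
    (F : B →ₗ[ℂ] A) (hF1 : F 1 = 1)
    (hFKS : ∀ b : B, star (F b) * F b ≤ F (star b * b))
    (hmul : ∀ c c' : C, F (G (c * c')) = F (G c) * F (G c')) :
    ∀ (c : C) (b : B),
      F (star (G c) * b) = star (F (G c)) * F b ∧ F (G c * b) = F (G c) * F b :=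
  spu_is_S_positive_general G hGKS F hFKS hmul
end

section
/- Invertible SPU maps are ⋆-homomorphisms: let A and B be unital C*-algebras over ℂ and let F : B → A and G : A → B be SPU maps such that G (F b) = b for all b ∈ B and F (G a) = a for all a ∈ A. Then F is multiplicative: F (b * b') = F b * F b' for all b, b' ∈ B (so F is a unital ⋆-algebra isomorphism with inverse G). -/
/-!
Schwarz maps are positive, hence monotone and ⋆-preserving. Applying the monotone map `G` to
the Schwarz inequality for `F` and comparing with the Schwarz inequality for `G` at `F b` gives
`G (star (F b) * F b) = star b * b`, so `F` attains equality in its Schwarz inequality. A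
⋆-preserving linear map with `F (star b * b) = star (F b) * F b` is multiplicative by
polarization.
-/

open Complex ComplexStarModule

section Schwarz

variable {A B 𝓕 : Type*}

lemma map_nonneg_of_star_mul_self_le [Semiring B] [PartialOrder B] [StarRing B]
    [StarOrderedRing B] [Semiring A] [PartialOrder A] [StarRing A] [StarOrderedRing A]
    [FunLike 𝓕 B A] [AddMonoidHomClass 𝓕 B A] {F : 𝓕}
    (hF : ∀ b, star (F b) * F b ≤ F (star b * b)) {b : B} (hb : 0 ≤ b) : 0 ≤ F b := by
  rw [StarOrderedRing.nonneg_iff] at hb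
  induction hb using AddSubmonoid.closure_induction with
  | mem _ hx =>
    obtain ⟨s, rfl⟩ := hx
    exact (star_mul_self_nonneg (F s)).trans (hF s)
  | zero => simp
  | add _ _ _ _ hx hy => simpa using add_nonneg hx hy

lemma map_star_mul_self_of_monotone_inverse [Mul A] [Star A] [PartialOrder A]
    [Mul B] [Star B] [PartialOrder B] {F : B → A} {G : A → B} (hG : Monotone G)
    (hFS : ∀ b, star (F b) * F b ≤ F (star b * b)) (hGS : ∀ a, star (G a) * G a ≤ G (star a * a))
    (hGF : ∀ b, G (F b) = b) (hFG : ∀ a, F (G a) = a) (b : B) :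
    F (star b * b) = star (F b) * F b := by
  have hle : G (star (F b) * F b) ≤ star b * b := by simpa [hGF] using hG (hFS b)
  have hge : star b * b ≤ G (star (F b) * F b) := by simpa [hGF] using hGS (F b)
  rw [← le_antisymm hle hge, hFG]

end Schwarz

namespace PositiveLinearMap

variable {A B : Type*} [AddCommGroup B] [PartialOrder B] [StarAddMonoid B] [Module ℂ B]
  [StarModule ℂ B] [SelfAdjointDecompose B] [NonUnitalRing A] [PartialOrder A] [StarRing A]
  [StarOrderedRing A] [Module ℂ A] [StarModule ℂ A]

lemma map_star (F : B →ₚ[ℂ] A) (b : B) : F (star b) = star (F b) := by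
  have hre := (ℜ b).2.map' F
  have him := (ℑ b).2.map' F
  rw [← realPart_add_I_smul_imaginaryPart b]
  simp only [star_add, star_smul, (ℜ b).2.star_eq, (ℑ b).2.star_eq, map_add, map_smul,
    hre.star_eq, him.star_eq, Complex.star_def, Complex.conj_I]

end PositiveLinearMap

section Polarization

variable {A B : Type*} [NonUnitalRing B] [StarRing B] [Module ℂ B] [StarModule ℂ B]
  [IsScalarTower ℂ B B] [SMulCommClass ℂ B B] [NonUnitalRing A] [StarRing A] [Module ℂ A]
  [StarModule ℂ A] [IsScalarTower ℂ A A] [SMulCommClass ℂ A A]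

lemma map_star_mul_of_map_star_mul_self (F : B →ₗ[ℂ] A)
    (hF : ∀ b, F (star b * b) = star (F b) * F b) (x y : B) :
    F (star x * y) = star (F x) * F y := by
  have hsum : ∀ x y : B,
      F (star x * y) + F (star y * x) = star (F x) * F y + star (F y) * F x := by
    intro x y
    have h := hF (x + y)
    simp only [star_add, add_mul, mul_add, map_add] at h
    linear_combination (norm := module) h - hF x - hF y
  have hdiff : F (star x * y) - F (star y * x) = star (F x) * F y - star (F y) * F x := by
    have h := hsum x (I • y)
    simp only [star_smul, Complex.star_def, Complex.conj_I, map_smul, mul_smul_comm,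
      smul_mul_assoc, map_neg, neg_smul, neg_mul] at h
    exact smul_right_injective A I_ne_zero (by linear_combination (norm := module) h)
  have h2 : (2 : ℂ) • F (star x * y) = (2 : ℂ) • (star (F x) * F y) := by
    linear_combination (norm := module) hsum x y + hdiff
  exact smul_right_injective A two_ne_zero h2

lemma map_mul_of_map_star_mul_self (F : B →ₗ[ℂ] A) (hF_star : ∀ b, F (star b) = star (F b))
    (hF : ∀ b, F (star b * b) = star (F b) * F b) (b b' : B) :
    F (b * b') = F b * F b' := by
  simpa [hF_star] using map_star_mul_of_map_star_mul_self F hF (star b) b'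

end Polarization

theorem invertible_spu_is_deterministic_general
    {A B : Type*}
    [CStarAlgebra A] [PartialOrder A] [StarOrderedRing A]
    [CStarAlgebra B] [PartialOrder B] [StarOrderedRing B]
    (F : B →ₗ[ℂ] A)
    (hFKS : ∀ b : B, star (F b) * F b ≤ F (star b * b))
    (G : A →ₗ[ℂ] B)
    (hGKS : ∀ a : A, star (G a) * G a ≤ G (star a * a))
    (hGF : ∀ b : B, G (F b) = b) (hFG : ∀ a : A, F (G a) = a) :
    ∀ b b' : B, F (b * b') = F b * F b' := by
  let posF : B →ₚ[ℂ] A := .mk₀ F fun _ ↦ map_nonneg_of_star_mul_self_le hFKS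
  let posG : A →ₚ[ℂ] B := .mk₀ G fun _ ↦ map_nonneg_of_star_mul_self_le hGKS
  exact map_mul_of_map_star_mul_self F posF.map_star
    (map_star_mul_self_of_monotone_inverse (OrderHomClass.mono posG) hFKS hGKS hGF hFG)

/-- **Invertible SPU maps are ⋆-homomorphisms.** If `F : B → A` and `G : A → B` are SPU maps
between unital C*-algebras over `ℂ` that are mutually inverse, then `F` is multiplicative. -/
theorem invertible_spu_is_deterministic
    {A B : Type*}
    [CStarAlgebra A] [PartialOrder A] [StarOrderedRing A]
    [CStarAlgebra B] [PartialOrder B] [StarOrderedRing B]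
    (F : B →ₗ[ℂ] A) (hF1 : F 1 = 1)
    (hFKS : ∀ b : B, star (F b) * F b ≤ F (star b * b))
    (G : A →ₗ[ℂ] B) (hG1 : G 1 = 1)
    (hGKS : ∀ a : A, star (G a) * G a ≤ G (star a * a))
    (hGF : ∀ b : B, G (F b) = b) (hFG : ∀ a : A, F (G a) = a) :
    ∀ b b' : B, F (b * b') = F b * F b' :=
  invertible_spu_is_deterministic_general F hFKS G hGKS hGF hFG
end

section
/- Weak a.e. Multiplication Lemma: let A, B, C be unital C*-algebras over ℂ, let ω : A → C be an SPU map, and let F : B → A be a linear map. If F (star b * b) − star (F b) * F b ∈ N_ω for every b ∈ B, then F (star b * c) − star (F b) * F c ∈ N_ω for all b, c ∈ B (i.e. F is right ω-a.e. deterministic). -/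
/-!
For a positive map `ω`, the right nullspace `N_ω` is a complex subspace: closure under addition
follows from the parallelogram law `(x+y)*(x+y) + (x-y)*(x-y) = 2 x*x + 2 y*y` and positivity.
The defect `(b, c) ↦ F (star b * c) - star (F b) * F c` is sesquilinear, so by polarization each
of its values is a linear combination of diagonal values, which lie in `N_ω` by hypothesis.
-/

open Complex

section Nullspace

variable {A C : Type*} [NonUnitalRing A] [StarRing A] [Module ℂ A] [StarModule ℂ A]
  [IsScalarTower ℂ A A] [SMulCommClass ℂ A A]
  [AddCommGroup C] [PartialOrder C] [IsOrderedAddMonoid C] [Module ℂ C]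

def rightNullspace (ω : A →ₗ[ℂ] C) (hω : ∀ a, 0 ≤ ω (star a * a)) : Submodule ℂ A where
  carrier := {a | ω (star a * a) = 0}
  zero_mem' := by simp
  add_mem' {x y} hx hy := by
    have parallelogram : star (x + y) * (x + y) + star (x - y) * (x - y)
        = (2 : ℂ) • (star x * x) + (2 : ℂ) • (star y * y) := by
      simp only [star_add, star_sub, two_smul]; noncomm_ring
    have hsum : ω (star (x + y) * (x + y)) + ω (star (x - y) * (x - y)) = 0 := by
      rw [← map_add, parallelogram, map_add, map_smul, map_smul, hx.out, hy.out,
        smul_zero, add_zero]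
    exact ((add_eq_zero_iff_of_nonneg (hω _) (hω _)).mp hsum).1
  smul_mem' z x hx := by
    show ω (star (z • x) * (z • x)) = 0
    rw [star_smul, smul_mul_smul_comm, map_smul, hx.out, smul_zero]

theorem mem_rightNullspace {ω : A →ₗ[ℂ] C} {hω : ∀ a, 0 ≤ ω (star a * a)} {a : A} :
    a ∈ rightNullspace ω hω ↔ ω (star a * a) = 0 :=
  Iff.rfl

end Nullspace

namespace LinearMap

variable {M N : Type*} [AddCommGroup M] [Module ℂ M] [AddCommGroup N] [Module ℂ N]

theorem four_smul_eq_polarization (D : M →ₗ⋆[ℂ] M →ₗ[ℂ] N) (x y : M) :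
    (4 : ℂ) • D x y = D (x + y) (x + y) - D (x - y) (x - y)
      - I • D (x + I • y) (x + I • y) + I • D (x - I • y) (x - I • y) := by
  simp only [map_add, map_sub, map_smul, map_smulₛₗ, add_apply, sub_apply, neg_apply,
    smul_apply, conj_I, neg_smul, smul_neg, smul_add, smul_sub, smul_smul]
  match_scalars <;> simp only [mul_one, I_mul_I] <;> ring

theorem apply_mem_of_forall_apply_self_mem (D : M →ₗ⋆[ℂ] M →ₗ[ℂ] N) (p : Submodule ℂ N)
    (hD : ∀ x, D x x ∈ p) (x y : M) : D x y ∈ p := by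
  have h4 : (4 : ℂ) • D x y ∈ p := by
    rw [four_smul_eq_polarization]
    exact p.add_mem (p.sub_mem (p.sub_mem (hD _) (hD _)) (p.smul_mem _ (hD _)))
      (p.smul_mem _ (hD _))
  exact (p.smul_mem_iff (by norm_num)).mp h4

end LinearMap

section Defect

variable {A B : Type*} [NonUnitalRing A] [StarRing A] [Module ℂ A] [StarModule ℂ A]
  [IsScalarTower ℂ A A] [SMulCommClass ℂ A A]
  [NonUnitalRing B] [StarRing B] [Module ℂ B] [StarModule ℂ B]
  [IsScalarTower ℂ B B] [SMulCommClass ℂ B B]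

def multiplicativityDefect (F : B →ₗ[ℂ] A) : B →ₗ⋆[ℂ] B →ₗ[ℂ] A :=
  LinearMap.mk₂'ₛₗ (starRingEnd ℂ) (RingHom.id ℂ) (fun b c => F (star b * c) - star (F b) * F c)
    (fun b b' c => by simp only [star_add, add_mul, map_add]; abel)
    (fun z b c => by simp only [star_smul, smul_mul_assoc, map_smul, smul_sub]; rfl)
    (fun b c c' => by simp only [mul_add, map_add]; abel)
    (fun z b c => by simp only [mul_smul_comm, map_smul, smul_sub]; rfl)

@[simp]
theorem multiplicativityDefect_apply (F : B →ₗ[ℂ] A) (b c : B) :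
    multiplicativityDefect F b c = F (star b * c) - star (F b) * F c :=
  rfl

end Defect

theorem weak_ae_multiplication_lemma_general
    {A B C : Type*}
    [CStarAlgebra A] [CStarAlgebra B]
    [CStarAlgebra C] [PartialOrder C] [StarOrderedRing C]
    (ω : A →ₗ[ℂ] C)
    (hωKS : ∀ a : A, star (ω a) * ω a ≤ ω (star a * a))
    (F : B →ₗ[ℂ] A)
    (hdiag : ∀ b : B,
      ω (star (F (star b * b) - star (F b) * F b) * (F (star b * b) - star (F b) * F b)) = 0) :
    ∀ b c : B,
      ω (star (F (star b * c) - star (F b) * F c) * (F (star b * c) - star (F b) * F c)) = 0 := by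
  have hpos : ∀ a : A, 0 ≤ ω (star a * a) := fun a => (star_mul_self_nonneg (ω a)).trans (hωKS a)
  intro b c
  have hdefect : multiplicativityDefect F b c ∈ rightNullspace ω hpos :=
    (multiplicativityDefect F).apply_mem_of_forall_apply_self_mem _
      (fun b => mem_rightNullspace.mpr (hdiag b)) b c
  simpa only [mem_rightNullspace, multiplicativityDefect_apply] using hdefect

/-- **The weak a.e. Multiplication Lemma.** Let `ω : A → C` be an SPU map between unital
C*-algebras over `ℂ` and `F : B → A` a linear map. If `F (star b * b) - star (F b) * F b`
lies in the right nullspace `N_ω = {a | ω (star a * a) = 0}` for every `b ∈ B`, then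
`F (star b * c) - star (F b) * F c ∈ N_ω` for all `b, c ∈ B`, i.e. `F` is right `ω`-a.e.
deterministic. -/
theorem weak_ae_multiplication_lemma
    {A B C : Type*}
    [CStarAlgebra A] [CStarAlgebra B]
    [CStarAlgebra C] [PartialOrder C] [StarOrderedRing C]
    (ω : A →ₗ[ℂ] C) (hω1 : ω 1 = 1)
    (hωKS : ∀ a : A, star (ω a) * ω a ≤ ω (star a * a))
    (F : B →ₗ[ℂ] A)
    (hdiag : ∀ b : B,
      ω (star (F (star b * b) - star (F b) * F b) * (F (star b * b) - star (F b) * F b)) = 0) :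
    ∀ b c : B,
      ω (star (F (star b * c) - star (F b) * F c) * (F (star b * c) - star (F b) * F c)) = 0 :=
  weak_ae_multiplication_lemma_general ω hωKS F hdiag
end

section
/- Almost-everywhere uniqueness of Bayes maps: let A, B, C be unital C*-algebras over ℂ, let ω : A → C and F : B → A be linear maps, and set ξ := ω ∘ F. (1) If G, G' : A → B both satisfy the Bayes condition for (F, ω, ξ), then ξ ((G a − G' a) * b) = 0 for all a ∈ A and b ∈ B. (2) If moreover G and G' are ⋆-preserving, then G a − G' a ∈ N_ξ for every a ∈ A, i.e. ξ (star (G a − G' a) * (G a − G' a)) = 0 for all a. -/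
theorem bayes_map_ae_unique_general
    {A B C : Type*} [CStarAlgebra A] [CStarAlgebra B] [CStarAlgebra C]
    (ω : A →ₗ[ℂ] C) (F : B →ₗ[ℂ] A)
    (ξ : B →ₗ[ℂ] C)
    (G G' : A →ₗ[ℂ] B)
    (hBayes : ∀ (a : A) (b : B), ξ (G a * b) = ω (a * F b))
    (hBayes' : ∀ (a : A) (b : B), ξ (G' a * b) = ω (a * F b)) :
    (∀ (a : A) (b : B), ξ ((G a - G' a) * b) = 0) ∧
      ((∀ a : A, G (star a) = star (G a)) → (∀ a : A, G' (star a) = star (G' a)) →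
        ∀ a : A, ξ (star (G a - G' a) * (G a - G' a)) = 0) := by
  have hdiff : ∀ (a : A) (b : B), ξ ((G a - G' a) * b) = 0 := fun a b => by
    rw [sub_mul, map_sub, hBayes, hBayes', sub_self]
  refine ⟨hdiff, fun hG hG' a => ?_⟩
  rw [star_sub, ← hG, ← hG']
  exact hdiff (star a) (G a - G' a)

/-- **A.e. uniqueness of Bayes maps.** Let `ω : A → C` and `F : B → A` be linear maps between
unital C*-algebras over `ℂ` and `ξ := ω ∘ F`. (1) If `G, G' : A → B` both satisfy the Bayes
condition for `(F, ω, ξ)`, then `ξ ((G a - G' a) * b) = 0` for all `a, b`. (2) If moreover `G`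
and `G'` are ⋆-preserving, then `G a - G' a` lies in the right nullspace `N_ξ` for every `a`. -/
theorem bayes_map_ae_unique
    {A B C : Type*} [CStarAlgebra A] [CStarAlgebra B] [CStarAlgebra C]
    (ω : A →ₗ[ℂ] C) (F : B →ₗ[ℂ] A)
    (ξ : B →ₗ[ℂ] C) (hξ : ∀ b : B, ξ b = ω (F b))
    (G G' : A →ₗ[ℂ] B)
    (hBayes : ∀ (a : A) (b : B), ξ (G a * b) = ω (a * F b))
    (hBayes' : ∀ (a : A) (b : B), ξ (G' a * b) = ω (a * F b)) :
    (∀ (a : A) (b : B), ξ ((G a - G' a) * b) = 0) ∧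
      ((∀ a : A, G (star a) = star (G a)) → (∀ a : A, G' (star a) = star (G' a)) →
        ∀ a : A, ξ (star (G a - G' a) * (G a - G' a)) = 0) :=
  bayes_map_ae_unique_general ω F ξ G G' hBayes hBayes'
end

section
/- Compositionality of Bayesian inversion: let A, B, C, D be unital C*-algebras over ℂ, let ω : A → C, F : B → A, and G : D → B be linear maps, and set ξ := ω ∘ F and ζ := ξ ∘ G. If Ḡ : A → B satisfies ξ (Ḡ a * b) = ω (a * F b) for all a ∈ A, b ∈ B, and H̄ : B → D satisfies ζ (H̄ b * d) = ξ (b * G d) for all b ∈ B, d ∈ D, then H̄ ∘ Ḡ satisfies ζ (H̄ (Ḡ a) * d) = ω (a * F (G d)) for all a ∈ A and d ∈ D, i.e. H̄ ∘ Ḡ is a Bayes map for (F ∘ G, ω, ζ). -/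
theorem bayes_maps_compose_general
    {A B C D : Type*} [CStarAlgebra A] [CStarAlgebra B] [CStarAlgebra C] [CStarAlgebra D]
    (ω : A →ₗ[ℂ] C) (F : B →ₗ[ℂ] A) (G : D →ₗ[ℂ] B)
    (ξ : B →ₗ[ℂ] C)
    (ζ : D →ₗ[ℂ] C)
    (Gbar : A →ₗ[ℂ] B)
    (hGbar : ∀ (a : A) (b : B), ξ (Gbar a * b) = ω (a * F b))
    (Hbar : B →ₗ[ℂ] D)
    (hHbar : ∀ (b : B) (d : D), ζ (Hbar b * d) = ξ (b * G d)) :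
    ∀ (a : A) (d : D), ζ (Hbar (Gbar a) * d) = ω (a * F (G d)) := by
  intro a d
  rw [hHbar, hGbar]

/-- **Compositionality of Bayesian inversion.** Let `ω : A → C`, `F : B → A`, `G : D → B` be
linear maps between unital C*-algebras over `ℂ`, with `ξ := ω ∘ F` and `ζ := ξ ∘ G`. If
`Ḡ : A → B` is a Bayes map for `(F, ω, ξ)` and `H̄ : B → D` is a Bayes map for `(G, ξ, ζ)`,
then `H̄ ∘ Ḡ` is a Bayes map for `(F ∘ G, ω, ζ)`. -/
theorem bayes_maps_compose
    {A B C D : Type*} [CStarAlgebra A] [CStarAlgebra B] [CStarAlgebra C] [CStarAlgebra D]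
    (ω : A →ₗ[ℂ] C) (F : B →ₗ[ℂ] A) (G : D →ₗ[ℂ] B)
    (ξ : B →ₗ[ℂ] C) (hξ : ∀ b : B, ξ b = ω (F b))
    (ζ : D →ₗ[ℂ] C) (hζ : ∀ d : D, ζ d = ξ (G d))
    (Gbar : A →ₗ[ℂ] B)
    (hGbar : ∀ (a : A) (b : B), ξ (Gbar a * b) = ω (a * F b))
    (Hbar : B →ₗ[ℂ] D)
    (hHbar : ∀ (b : B) (d : D), ζ (Hbar b * d) = ξ (b * G d)) :
    ∀ (a : A) (d : D), ζ (Hbar (Gbar a) * d) = ω (a * F (G d)) :=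
  bayes_maps_compose_general ω F G ξ ζ Gbar hGbar Hbar hHbar
end

section
/- A Bayes map for an a.e. deterministic map is a disintegration: let A and B be unital C*-algebras over ℂ, let ω : A → ℂ be a state on A, let F : B → A be a unital linear map such that F (b * c) − F b * F c ∈ N_ω for all b, c ∈ B (F is ω-a.e. deterministic), set ξ := ω ∘ F, and let G : A → B be a linear map satisfying ξ (G a * b) = ω (a * F b) for all a ∈ A and b ∈ B. Then ξ (G a) = ω a for every a ∈ A and ξ (G (F b) * c) = ξ (b * c) for all b, c ∈ B; that is, G is a disintegration of (F, ω, ξ). -/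
/-!
Taking `b = 1` in the Bayes condition gives `ξ ∘ G = ω`. For the second identity the Bayes condition
turns `ξ (G (F b) * c)` into `ω (F b * F c)`, and a positive functional vanishes on its right
nullspace by Cauchy–Schwarz, so a.e. determinism gives `ω (F b * F c) = ω (F (b * c)) = ξ (b * c)`.
-/

open scoped ComplexOrder InnerProductSpace

namespace PositiveLinearMap

lemma apply_star_mul_eq_zero_of_apply_star_mul_self_eq_zero {A : Type*}
    [NonUnitalCStarAlgebra A] [PartialOrder A] [StarOrderedRing A]
    (f : A →ₚ[ℂ] ℂ) {a : A} (ha : f (star a * a) = 0) (b : A) : f (star b * a) = 0 := by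
  have hnorm : ‖f.toPreGNS a‖ = 0 := by
    have := f.preGNS_norm_sq (f.toPreGNS a)
    rw [ofPreGNS_toPreGNS, ha] at this
    exact_mod_cast pow_eq_zero_iff two_ne_zero |>.mp this
  have hinner : ‖⟪f.toPreGNS b, f.toPreGNS a⟫_ℂ‖ ≤ 0 := by
    simpa [hnorm] using norm_inner_le_norm (𝕜 := ℂ) (f.toPreGNS b) (f.toPreGNS a)
  exact norm_le_zero_iff.mp hinner

lemma apply_eq_zero_of_apply_star_mul_self_eq_zero {A : Type*}
    [CStarAlgebra A] [PartialOrder A] [StarOrderedRing A]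
    (f : A →ₚ[ℂ] ℂ) {a : A} (ha : f (star a * a) = 0) : f a = 0 := by
  simpa using f.apply_star_mul_eq_zero_of_apply_star_mul_self_eq_zero ha 1

end PositiveLinearMap

theorem bayes_map_of_ae_deterministic_is_disintegration_general
    {A B : Type*}
    [CStarAlgebra A] [PartialOrder A] [StarOrderedRing A]
    [CStarAlgebra B]
    (ω : A →ₗ[ℂ] ℂ) (hωpos : ∀ a : A, 0 ≤ a → 0 ≤ ω a)
    (F : B →ₗ[ℂ] A) (hF1 : F 1 = 1)
    (hFdet : ∀ b c : B, ω (star (F (b * c) - F b * F c) * (F (b * c) - F b * F c)) = 0)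
    (ξ : B →ₗ[ℂ] ℂ) (hξ : ∀ b : B, ξ b = ω (F b))
    (G : A →ₗ[ℂ] B)
    (hBayes : ∀ (a : A) (b : B), ξ (G a * b) = ω (a * F b)) :
    (∀ a : A, ξ (G a) = ω a) ∧ (∀ b c : B, ξ (G (F b) * c) = ξ (b * c)) := by
  refine ⟨fun a ↦ by simpa [hF1] using hBayes a 1, fun b c ↦ ?_⟩
  have hmult : ω (F (b * c) - F b * F c) = 0 :=
    (PositiveLinearMap.mk₀ ω hωpos).apply_eq_zero_of_apply_star_mul_self_eq_zero (hFdet b c)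
  rw [map_sub, sub_eq_zero] at hmult
  rw [hBayes, hξ, hmult]

/-- **A Bayes map for an a.e. deterministic map is a disintegration.** Let `ω : A → ℂ` be a
state on a unital C*-algebra `A` over `ℂ`, let `F : B → A` be a unital linear map that is
`ω`-a.e. deterministic (`F (b * c) - F b * F c ∈ N_ω` for all `b, c`), set `ξ := ω ∘ F`, and
let `G : A → B` satisfy the Bayes condition `ξ (G a * b) = ω (a * F b)`. Then `ξ ∘ G = ω` and
`ξ (G (F b) * c) = ξ (b * c)` for all `b, c`, i.e. `G` is a disintegration of `(F, ω, ξ)`. -/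
theorem bayes_map_of_ae_deterministic_is_disintegration
    {A B : Type*}
    [CStarAlgebra A] [PartialOrder A] [StarOrderedRing A]
    [CStarAlgebra B]
    (ω : A →ₗ[ℂ] ℂ) (hω1 : ω 1 = 1) (hωpos : ∀ a : A, 0 ≤ a → 0 ≤ ω a)
    (F : B →ₗ[ℂ] A) (hF1 : F 1 = 1)
    (hFdet : ∀ b c : B, ω (star (F (b * c) - F b * F c) * (F (b * c) - F b * F c)) = 0)
    (ξ : B →ₗ[ℂ] ℂ) (hξ : ∀ b : B, ξ b = ω (F b))
    (G : A →ₗ[ℂ] B)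
    (hBayes : ∀ (a : A) (b : B), ξ (G a * b) = ω (a * F b)) :
    (∀ a : A, ξ (G a) = ω a) ∧ (∀ b c : B, ξ (G (F b) * c) = ξ (b * c)) :=
  bayes_map_of_ae_deterministic_is_disintegration_general ω hωpos F hF1 hFdet ξ hξ G hBayes
end

section
/- Relative conditional expectation property: let A, B, C be unital C*-algebras over ℂ, let ξ : B → C be a positive ⋆-preserving linear map, and let F : B → A and G : A → B be SPU maps such that ξ (x * (G (F b) − b)) = 0 for all x, b ∈ B (G ∘ F is ξ-a.e. the identity). Then for every b ∈ B the following equalities hold: ξ (star b * b) = ξ (star (G (F b)) * G (F b)) = ξ (G (star (F b) * F b)) = ξ (G (F (star b * b))). -/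
/-!
Write `T = G ∘ F`. Pushing the Schwarz inequalities of `G` and of `F` through the positive maps
`ξ` and `G` gives
`ξ (star (T b) * T b) ≤ ξ (G (star (F b) * F b)) ≤ ξ (T (star b * b))`.
Since `T` is `ξ`-a.e. the identity, both ends of this chain equal `ξ (star b * b)`, which forces
equality throughout.
-/

theorem map_nonneg_of_star_mul_self_le_s16 {A B Φ : Type*}
    [NonUnitalSemiring A] [PartialOrder A] [StarRing A] [StarOrderedRing A]
    [NonUnitalSemiring B] [PartialOrder B] [StarRing B] [StarOrderedRing B]
    [FunLike Φ A B] [AddMonoidHomClass Φ A B] (G : Φ)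
    (hG : ∀ a : A, star (G a) * G a ≤ G (star a * a)) {a : A} (ha : 0 ≤ a) : 0 ≤ G a := by
  rw [StarOrderedRing.nonneg_iff] at ha
  induction ha using AddSubmonoid.closure_induction with
  | mem x hx =>
    obtain ⟨s, rfl⟩ := hx
    exact (star_mul_self_nonneg (G s)).trans (hG s)
  | zero => simp
  | add x y _ _ hx hy => simpa only [map_add] using add_nonneg hx hy

theorem map_star_mul_self_eq_of_map_mul_sub_eq_zero {B C Φ : Type*}
    [NonUnitalRing B] [StarRing B] [AddCommGroup C] [StarAddMonoid C]
    [FunLike Φ B C] [AddMonoidHomClass Φ B C] (ξ : Φ)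
    (hξstar : ∀ x : B, ξ (star x) = star (ξ x)) {b c : B}
    (h : ∀ x : B, ξ (x * (c - b)) = 0) : ξ (star c * c) = ξ (star b * b) := by
  have hsplit : star c * c - star b * b = star c * (c - b) + star (star b * (c - b)) := by
    simp only [star_mul, star_star, star_sub, mul_sub]
    abel
  rw [← sub_eq_zero, ← map_sub, hsplit, map_add, hξstar, h, h, star_zero, add_zero]

theorem relative_conditional_expectation_property_general
    {A B C : Type*}
    [CStarAlgebra A] [PartialOrder A] [StarOrderedRing A]
    [CStarAlgebra B] [PartialOrder B] [StarOrderedRing B]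
    [CStarAlgebra C] [PartialOrder C] [StarOrderedRing C]
    (ξ : B →ₗ[ℂ] C) (hξpos : ∀ b : B, 0 ≤ b → 0 ≤ ξ b)
    (hξstar : ∀ b : B, ξ (star b) = star (ξ b))
    (F : B →ₗ[ℂ] A)
    (hFKS : ∀ b : B, star (F b) * F b ≤ F (star b * b))
    (G : A →ₗ[ℂ] B)
    (hGKS : ∀ a : A, star (G a) * G a ≤ G (star a * a))
    (hae : ∀ x b : B, ξ (x * (G (F b) - b)) = 0) :
    ∀ b : B,
      ξ (star b * b) = ξ (star (G (F b)) * G (F b)) ∧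
      ξ (star (G (F b)) * G (F b)) = ξ (G (star (F b) * F b)) ∧
      ξ (G (star (F b) * F b)) = ξ (G (F (star b * b))) := by
  intro b
  have hξmono : Monotone ξ := (monotone_iff_map_nonneg ξ).2 hξpos
  have hGmono : Monotone G :=
    (monotone_iff_map_nonneg G).2 fun _ ↦ map_nonneg_of_star_mul_self_le_s16 G hGKS
  have hleft : ξ (star (G (F b)) * G (F b)) = ξ (star b * b) :=
    map_star_mul_self_eq_of_map_mul_sub_eq_zero ξ hξstar (hae · b)
  have hright : ξ (G (F (star b * b))) = ξ (star b * b) := by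
    simpa only [one_mul, map_sub, sub_eq_zero] using hae 1 (star b * b)
  have hmiddle : ξ (G (star (F b) * F b)) = ξ (star b * b) :=
    le_antisymm (hright ▸ hξmono (hGmono (hFKS b))) (hleft ▸ hξmono (hGKS (F b)))
  exact ⟨hleft.symm, hleft.trans hmiddle.symm, hmiddle.trans hright.symm⟩

/-- **The relative conditional expectation property.** Let `ξ : B → C` be a positive
⋆-preserving linear map between unital C*-algebras over `ℂ`, and let `F : B → A` and
`G : A → B` be SPU maps with `G ∘ F` being `ξ`-a.e. the identity, in the sense that
`ξ (x * (G (F b) - b)) = 0` for all `x, b ∈ B`. Then for every `b ∈ B`: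
`ξ (star b * b) = ξ (star (G (F b)) * G (F b)) = ξ (G (star (F b) * F b)) = ξ (G (F (star b * b)))`. -/
theorem relative_conditional_expectation_property
    {A B C : Type*}
    [CStarAlgebra A] [PartialOrder A] [StarOrderedRing A]
    [CStarAlgebra B] [PartialOrder B] [StarOrderedRing B]
    [CStarAlgebra C] [PartialOrder C] [StarOrderedRing C]
    (ξ : B →ₗ[ℂ] C) (hξpos : ∀ b : B, 0 ≤ b → 0 ≤ ξ b)
    (hξstar : ∀ b : B, ξ (star b) = star (ξ b))
    (F : B →ₗ[ℂ] A) (hF1 : F 1 = 1)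
    (hFKS : ∀ b : B, star (F b) * F b ≤ F (star b * b))
    (G : A →ₗ[ℂ] B) (hG1 : G 1 = 1)
    (hGKS : ∀ a : A, star (G a) * G a ≤ G (star a * a))
    (hae : ∀ x b : B, ξ (x * (G (F b) - b)) = 0) :
    ∀ b : B,
      ξ (star b * b) = ξ (star (G (F b)) * G (F b)) ∧
      ξ (star (G (F b)) * G (F b)) = ξ (G (star (F b) * F b)) ∧
      ξ (G (star (F b) * F b)) = ξ (G (F (star b * b))) :=
  relative_conditional_expectation_property_general ξ hξpos hξstar F hFKS G hGKS hae
end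

section
/- SPU maps are causal: let A, B, C, D be unital C*-algebras over ℂ and let F : A → D, G : B → A, and H, K : C → B be SPU maps. If F (G (b * (H c − K c))) = 0 for all b ∈ B and c ∈ C, then F (a * (G (b * H c) − G (b * K c))) = 0 for all a ∈ A, b ∈ B, and c ∈ C. -/
/-!
The Schwarz inequality `star (F x) * F x ≤ F (star x * x)` makes `F` positive and forces
`F x = 0` as soon as `F (star x * x) = 0`. Since `star (a * x) * (a * x) ≤ ‖a‖ ^ 2 • (star x * x)`,
the elements with `F (star x * x) = 0` form a left ideal, so they satisfy `F (a * x) = 0` for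
every `a`. For `x = G (b * e)` with `e = H c - K c`, the Schwarz inequality of `G` bounds
`star x * x` by `G (star (b * e) * (b * e))`, which `F` kills by the hypothesis applied to
`star (b * e) * b`.
-/

section SchwarzMap

variable {A D 𝓕 : Type*}

section Order

variable [NonUnitalRing A] [PartialOrder A] [StarRing A] [StarOrderedRing A]
  [NonUnitalRing D] [PartialOrder D] [StarRing D] [StarOrderedRing D]
  [FunLike 𝓕 A D] [AddMonoidHomClass 𝓕 A D]

theorem map_nonneg_of_schwarz {F : 𝓕} (hF : ∀ a, star (F a) * F a ≤ F (star a * a))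
    {x : A} (hx : 0 ≤ x) : 0 ≤ F x := by
  rw [StarOrderedRing.nonneg_iff] at hx
  induction hx using AddSubmonoid.closure_induction with
  | mem y hy =>
    obtain ⟨s, rfl⟩ := hy
    exact (star_mul_self_nonneg (F s)).trans (hF s)
  | zero => rw [map_zero]
  | add y z _ _ hy hz => rw [map_add]; exact add_nonneg hy hz

theorem monotone_of_schwarz {F : 𝓕} (hF : ∀ a, star (F a) * F a ≤ F (star a * a)) :
    Monotone F := fun x y hxy ↦ by
  simpa using map_nonneg_of_schwarz hF (sub_nonneg.2 hxy)

end Order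

theorem eq_zero_of_schwarz_of_map_star_mul_self_eq_zero [Mul A] [Star A]
    [NonUnitalCStarAlgebra D] [PartialOrder D] [StarOrderedRing D] [FunLike 𝓕 A D] {F : 𝓕}
    (hF : ∀ a, star (F a) * F a ≤ F (star a * a)) {x : A} (hx : F (star x * x) = 0) :
    F x = 0 := by
  refine (CStarRing.star_mul_self_eq_zero_iff _).1 (le_antisymm ?_ (star_mul_self_nonneg _))
  simpa [hx] using hF x

variable [NonUnitalCStarAlgebra A] [PartialOrder A] [StarOrderedRing A]
  [NonUnitalCStarAlgebra D] [PartialOrder D] [StarOrderedRing D]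

theorem star_mul_mul_self_le_norm_sq_smul (a x : A) :
    star (a * x) * (a * x) ≤ ‖a‖ ^ 2 • (star x * x) :=
  calc star (a * x) * (a * x) = star x * (star a * a) * x := by simp only [star_mul, mul_assoc]
    _ ≤ ‖star a * a‖ • (star x * x) := CStarAlgebra.star_left_conjugate_le_norm_smul
    _ = ‖a‖ ^ 2 • (star x * x) := by rw [CStarRing.norm_star_mul_self, sq]

theorem map_mul_eq_zero_of_schwarz_of_map_star_mul_self_eq_zero (F : A →ₗ[ℂ] D)
    (hF : ∀ a, star (F a) * F a ≤ F (star a * a)) {x : A} (hx : F (star x * x) = 0) (a : A) :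
    F (a * x) = 0 := by
  refine eq_zero_of_schwarz_of_map_star_mul_self_eq_zero hF (le_antisymm ?_
    (map_nonneg_of_schwarz hF (star_mul_self_nonneg _)))
  calc F (star (a * x) * (a * x))
      ≤ F (‖a‖ ^ 2 • (star x * x)) :=
        monotone_of_schwarz hF (star_mul_mul_self_le_norm_sq_smul a x)
    _ = 0 := by rw [F.map_smul_of_tower, hx, smul_zero]

end SchwarzMap

theorem spu_causal_general
    {A B C D : Type*}
    [CStarAlgebra A] [PartialOrder A] [StarOrderedRing A]
    [CStarAlgebra B]
    [CStarAlgebra C]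
    [CStarAlgebra D] [PartialOrder D] [StarOrderedRing D]
    (F : A →ₗ[ℂ] D)
    (hFKS : ∀ a : A, star (F a) * F a ≤ F (star a * a))
    (G : B →ₗ[ℂ] A)
    (hGKS : ∀ b : B, star (G b) * G b ≤ G (star b * b))
    (H : C →ₗ[ℂ] B)
    (K : C →ₗ[ℂ] B)
    (hcausal : ∀ (b : B) (c : C), F (G (b * (H c - K c))) = 0) :
    ∀ (a : A) (b : B) (c : C), F (a * (G (b * H c) - G (b * K c))) = 0 := by
  intro a b c
  set y := b * (H c - K c)
  have hFG : F (G (star y * y)) = 0 := by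
    simpa only [mul_assoc] using hcausal (star y * b) c
  have hx : F (star (G y) * G y) = 0 :=
    le_antisymm (hFG ▸ monotone_of_schwarz hFKS (hGKS y))
      (map_nonneg_of_schwarz hFKS (star_mul_self_nonneg _))
  rw [← map_sub, ← mul_sub]
  exact map_mul_eq_zero_of_schwarz_of_map_star_mul_self_eq_zero F hFKS hx a

/-- **SPU maps are causal.** Let `F : A → D`, `G : B → A`, and `H, K : C → B` be SPU maps
between unital C*-algebras over `ℂ`. If `F (G (b * (H c - K c))) = 0` for all `b ∈ B` and
`c ∈ C`, then `F (a * (G (b * H c) - G (b * K c))) = 0` for all `a ∈ A`, `b ∈ B`, `c ∈ C`. -/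
theorem spu_causal
    {A B C D : Type*}
    [CStarAlgebra A] [PartialOrder A] [StarOrderedRing A]
    [CStarAlgebra B] [PartialOrder B] [StarOrderedRing B]
    [CStarAlgebra C]
    [CStarAlgebra D] [PartialOrder D] [StarOrderedRing D]
    (F : A →ₗ[ℂ] D) (hF1 : F 1 = 1)
    (hFKS : ∀ a : A, star (F a) * F a ≤ F (star a * a))
    (G : B →ₗ[ℂ] A) (hG1 : G 1 = 1)
    (hGKS : ∀ b : B, star (G b) * G b ≤ G (star b * b))
    (H : C →ₗ[ℂ] B) (hH1 : H 1 = 1)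
    (hHKS : ∀ c : C, star (H c) * H c ≤ H (star c * c))
    (K : C →ₗ[ℂ] B) (hK1 : K 1 = 1)
    (hKKS : ∀ c : C, star (K c) * K c ≤ K (star c * c))
    (hcausal : ∀ (b : B) (c : C), F (G (b * (H c - K c))) = 0) :
    ∀ (a : A) (b : B) (c : C), F (a * (G (b * H c) - G (b * K c))) = 0 :=
  spu_causal_general F hFKS G hGKS H K hcausal
end
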